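/- Let X be a Banach space and let (x_n) be a seminormalized sequence in X that is K-basic (K ≥ 1) and λ-dominates the summing basis of c₀ (λ > 0). Fix ε ∈ (0,1). For each n ≥ 1 let (λ_k^{(n+1)})_{k≥n+1} be positive reals such that α_n := 1 − ∑_{k=n+1}^∞ λ_k^{(n+1)} satisfies 1/2 ≤ α_n < 1 for every n, the sequence (α_n) is nondecreasing with α_n → 1, and ∑_{n=1}^∞ ∑_{k=n+1}^∞ λ_k^{(n+1)} < ε·inf_n‖x_n‖/(4K·sup_n‖x_n‖). Define z_n := α_n x_n + ∑_{k=n+1}^∞ λ_k^{(n+1)} x_k. Then for every finitely supported sequence of scalars (a_i) one has ‖∑_{i=1}^∞ a_i z_i‖ ≥ ((1 − ε)/(4K))·‖∑_{i=1}^∞ a_i x_i‖. -/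

import Mathlib

/-!
Each `z_i` is a small perturbation of `x_i`: `z_i - x_i = ∑_k Λ_i k (x_k - x_i)`, so
`‖z_i - x_i‖ ≤ 2 σ_i sup‖x‖` with `σ_i = ∑_k Λ_i k`. Basicness bounds every coefficient,
`|a_i| inf‖x‖ ≤ 2K ‖∑ a_j x_j‖`, so the total perturbation of `∑ a_i x_i` is at most
`4K sup‖x‖ / inf‖x‖ · ∑ σ_i · ‖∑ a_j x_j‖ ≤ ε ‖∑ a_j x_j‖`, which already gives the bound
with constant `1 - ε ≥ (1 - ε)/(4K)`.
-/

open Filter Topology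

noncomputable section

/-- `(x_n)` is `K`-basic: for all scalars and `n ≤ m`,
`‖∑_{i<n} a_i x_i‖ ≤ K ‖∑_{i<m} a_i x_i‖`. -/
def IsKBasic {X : Type*} [NormedAddCommGroup X] [NormedSpace ℝ X]
    (K : ℝ) (x : ℕ → X) : Prop :=
  ∀ (a : ℕ → ℝ) (n m : ℕ), n ≤ m →
    ‖∑ i ∈ Finset.range n, a i • x i‖ ≤ K * ‖∑ i ∈ Finset.range m, a i • x i‖

/-- `(x_n)` `λ`-dominates the summing basis of `c₀`:
`|∑_{k ≤ i < n} a_i| ≤ λ ‖∑_{i<n} a_i x_i‖` for all `k ≤ n`. -/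
def DomSumming {X : Type*} [NormedAddCommGroup X] [NormedSpace ℝ X]
    (lam : ℝ) (x : ℕ → X) : Prop :=
  ∀ (a : ℕ → ℝ) (k n : ℕ), k ≤ n →
    |∑ i ∈ Finset.Ico k n, a i| ≤ lam * ‖∑ i ∈ Finset.range n, a i • x i‖

/-- `(y_n)` is seminormalized: `0 < A ≤ ‖y_n‖ ≤ B < ∞` for all `n`. -/
def Seminormalized {X : Type*} [NormedAddCommGroup X] (y : ℕ → X) : Prop :=
  ∃ A B : ℝ, 0 < A ∧ ∀ n, A ≤ ‖y n‖ ∧ ‖y n‖ ≤ B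

open Finset

section

variable {X : Type*} [NormedAddCommGroup X]

lemma Seminormalized.iInf_norm_pos {x : ℕ → X} (h : Seminormalized x) : 0 < ⨅ n, ‖x n‖ := by
  obtain ⟨A, _, hA, hAB⟩ := h
  exact hA.trans_le (le_ciInf fun n => (hAB n).1)

lemma Seminormalized.iInf_norm_le {x : ℕ → X} (h : Seminormalized x) (k : ℕ) :
    ⨅ n, ‖x n‖ ≤ ‖x k‖ := by
  obtain ⟨A, _, _, hAB⟩ := h
  exact ciInf_le ⟨A, by rintro _ ⟨n, rfl⟩; exact (hAB n).1⟩ k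

lemma Seminormalized.norm_le_iSup_norm {x : ℕ → X} (h : Seminormalized x) (k : ℕ) :
    ‖x k‖ ≤ ⨆ n, ‖x n‖ := by
  obtain ⟨_, B, _, hAB⟩ := h
  exact le_ciSup ⟨B, by rintro _ ⟨n, rfl⟩; exact (hAB n).2⟩ k

lemma one_sub_mul_norm_le_of_norm_sub_le {u v : X} {ε : ℝ} (h : ‖u - v‖ ≤ ε * ‖v‖) :
    (1 - ε) * ‖v‖ ≤ ‖u‖ := by
  linarith [norm_sub_norm_le v u, norm_sub_rev u v]

variable [NormedSpace ℝ X]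

lemma IsKBasic.norm_smul_le {K : ℝ} {x : ℕ → X} (h : IsKBasic K x) (a : ℕ → ℝ) {i n : ℕ}
    (hi : i < n) : ‖a i • x i‖ ≤ 2 * K * ‖∑ j ∈ range n, a j • x j‖ := by
  have hdiff : a i • x i = ∑ j ∈ range (i + 1), a j • x j - ∑ j ∈ range i, a j • x j := by
    rw [sum_range_succ, add_sub_cancel_left]
  calc ‖a i • x i‖
      ≤ ‖∑ j ∈ range (i + 1), a j • x j‖ + ‖∑ j ∈ range i, a j • x j‖ := hdiff ▸ norm_sub_le _ _
    _ ≤ K * ‖∑ j ∈ range n, a j • x j‖ + K * ‖∑ j ∈ range n, a j • x j‖ :=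
        add_le_add (h a _ _ hi) (h a _ _ hi.le)
    _ = 2 * K * ‖∑ j ∈ range n, a j • x j‖ := by ring

lemma IsKBasic.abs_mul_le {K I : ℝ} {x : ℕ → X} (h : IsKBasic K x) (hI : ∀ k, I ≤ ‖x k‖)
    (a : ℕ → ℝ) {i n : ℕ} (hi : i < n) : |a i| * I ≤ 2 * K * ‖∑ j ∈ range n, a j • x j‖ :=
  calc |a i| * I ≤ |a i| * ‖x i‖ := mul_le_mul_of_nonneg_left (hI i) (abs_nonneg _)
    _ = ‖a i • x i‖ := by rw [norm_smul, Real.norm_eq_abs]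
    _ ≤ _ := h.norm_smul_le a hi

lemma norm_tsum_smul_le {ι : Type*} {c : ι → ℝ} {x : ι → X} {B : ℝ} (hc : ∀ k, 0 ≤ c k)
    (hcs : Summable c) (hx : ∀ k, ‖x k‖ ≤ B) : ‖∑' k, c k • x k‖ ≤ (∑' k, c k) * B :=
  tsum_of_norm_bounded (hcs.hasSum.mul_right B) fun k => by
    rw [norm_smul, Real.norm_of_nonneg (hc k)]
    exact mul_le_mul_of_nonneg_left (hx k) (hc k)

lemma norm_smul_add_tsum_smul_sub_le {ι : Type*} {c : ι → ℝ} {x : ι → X} {B : ℝ}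
    (hc : ∀ k, 0 ≤ c k) (hcs : Summable c) (hx : ∀ k, ‖x k‖ ≤ B) (i : ι) :
    ‖(1 - ∑' k, c k) • x i + ∑' k, c k • x k - x i‖ ≤ 2 * (∑' k, c k) * B := by
  have hσ : 0 ≤ ∑' k, c k := tsum_nonneg hc
  have hrw : (1 - ∑' k, c k) • x i + ∑' k, c k • x k - x i
      = -((∑' k, c k) • x i) + ∑' k, c k • x k := by
    rw [sub_smul, one_smul]; abel
  calc ‖(1 - ∑' k, c k) • x i + ∑' k, c k • x k - x i‖
      ≤ ‖(∑' k, c k) • x i‖ + ‖∑' k, c k • x k‖ :=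
        hrw ▸ (norm_add_le _ _).trans_eq (by rw [norm_neg])
    _ ≤ (∑' k, c k) * B + (∑' k, c k) * B := by
        gcongr
        · rw [norm_smul, Real.norm_of_nonneg hσ]
          exact mul_le_mul_of_nonneg_left (hx i) hσ
        · exact norm_tsum_smul_le hc hcs hx
    _ = 2 * (∑' k, c k) * B := by ring

lemma norm_sum_smul_sub_sum_smul_le {ι : Type*} (s : Finset ι) {a δ : ι → ℝ} {x z : ι → X}
    {M : ℝ} (ha : ∀ i ∈ s, |a i| ≤ M) (hzx : ∀ i ∈ s, ‖z i - x i‖ ≤ δ i) :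
    ‖∑ i ∈ s, a i • z i - ∑ i ∈ s, a i • x i‖ ≤ M * ∑ i ∈ s, δ i := by
  rw [← sum_sub_distrib, mul_sum]
  refine (norm_sum_le _ _).trans (sum_le_sum fun i hi => ?_)
  rw [← smul_sub, norm_smul, Real.norm_eq_abs]
  exact mul_le_mul (ha i hi) (hzx i hi) (norm_nonneg _) ((abs_nonneg _).trans (ha i hi))

lemma IsKBasic.norm_sum_smul_sub_le {K I : ℝ} {x z : ℕ → X} {δ : ℕ → ℝ} (h : IsKBasic K x)
    (hK : 0 ≤ K) (hI : 0 < I) (hIx : ∀ k, I ≤ ‖x k‖) (hzx : ∀ i, ‖z i - x i‖ ≤ δ i)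
    (hδ : Summable δ) (a : ℕ → ℝ) (n : ℕ) :
    ‖∑ i ∈ range n, a i • z i - ∑ i ∈ range n, a i • x i‖
      ≤ 2 * K * (∑' i, δ i) / I * ‖∑ i ∈ range n, a i • x i‖ := by
  set S := ‖∑ i ∈ range n, a i • x i‖
  have hδ0 : ∀ i, 0 ≤ δ i := fun i => (norm_nonneg _).trans (hzx i)
  calc _ ≤ (2 * K * S / I) * ∑ i ∈ range n, δ i :=
        norm_sum_smul_sub_sum_smul_le _
          (fun i hi => (le_div_iff₀ hI).2 (h.abs_mul_le hIx a (mem_range.1 hi))) fun i _ => hzx i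
    _ ≤ (2 * K * S / I) * ∑' i, δ i := by
        gcongr
        exact hδ.sum_le_tsum _ fun i _ => hδ0 i
    _ = _ := by ring

end

theorem stmt10_general {X : Type*} [NormedAddCommGroup X] [NormedSpace ℝ X]
    (x : ℕ → X) (hsem : Seminormalized x)
    (K ε : ℝ) (hK : 1 ≤ K)
    (hbasic : IsKBasic K x)
    (hε : ε ∈ Set.Ioo (0:ℝ) 1)
    (Λ : ℕ → ℕ → ℝ)
    (hpos : ∀ n k, n < k → 0 < Λ n k)
    (hzero : ∀ n k, k ≤ n → Λ n k = 0)
    (hsum : ∀ n, Summable (Λ n))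
    (α : ℕ → ℝ) (hα : ∀ n, α n = 1 - ∑' k, Λ n k)
    (htot : Summable fun n => ∑' k, Λ n k)
    (hbound : (∑' n, ∑' k, Λ n k) < ε * (⨅ n, ‖x n‖) / (4 * K * ⨆ n, ‖x n‖))
    (z : ℕ → X) (hz : ∀ n, z n = α n • x n + ∑' k, Λ n k • x k) :
    ∀ (n : ℕ) (a : ℕ → ℝ),
      ((1 - ε) / (4 * K)) * ‖∑ i ∈ Finset.range n, a i • x i‖ ≤ ‖∑ i ∈ Finset.range n, a i • z i‖ := by
  intro n a
  set I := ⨅ n, ‖x n‖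
  set B := ⨆ n, ‖x n‖
  set σ := fun i => ∑' k, Λ i k
  have hI : 0 < I := hsem.iInf_norm_pos
  have hB : 0 < B := hI.trans_le ((hsem.iInf_norm_le 0).trans (hsem.norm_le_iSup_norm 0))
  have hΛ : ∀ i k, 0 ≤ Λ i k := fun i k =>
    (lt_or_ge i k).elim (fun h => (hpos i k h).le) fun h => (hzero i k h).ge
  have hzx : ∀ i, ‖z i - x i‖ ≤ 2 * σ i * B := fun i =>
    hz i ▸ hα i ▸ norm_smul_add_tsum_smul_sub_le (hΛ i) (hsum i) hsem.norm_le_iSup_norm i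
  have hsmall : 2 * K * (∑' i, 2 * σ i * B) / I ≤ ε := by
    rw [tsum_mul_right, tsum_mul_left, div_le_iff₀ hI]
    rw [lt_div_iff₀ (by positivity)] at hbound
    linarith
  have hperturb := hbasic.norm_sum_smul_sub_le (by linarith) hI hsem.iInf_norm_le hzx
    ((htot.mul_left 2).mul_right B) a n
  calc (1 - ε) / (4 * K) * ‖∑ i ∈ range n, a i • x i‖
      ≤ (1 - ε) * ‖∑ i ∈ range n, a i • x i‖ := by
        gcongr
        exact div_le_self (by linarith [hε.2]) (by linarith)
    _ ≤ ‖∑ i ∈ range n, a i • z i‖ := one_sub_mul_norm_le_of_norm_sub_le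
        (hperturb.trans (by gcongr))

theorem stmt10 {X : Type*} [NormedAddCommGroup X] [NormedSpace ℝ X] [CompleteSpace X]
    (x : ℕ → X) (hsem : Seminormalized x)
    (K lam ε : ℝ) (hK : 1 ≤ K) (hlam : 0 < lam)
    (hbasic : IsKBasic K x) (hdom : DomSumming lam x)
    (hε : ε ∈ Set.Ioo (0:ℝ) 1)
    (Λ : ℕ → ℕ → ℝ)
    (hpos : ∀ n k, n < k → 0 < Λ n k)
    (hzero : ∀ n k, k ≤ n → Λ n k = 0)
    (hsum : ∀ n, Summable (Λ n))
    (α : ℕ → ℝ) (hα : ∀ n, α n = 1 - ∑' k, Λ n k)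
    (hα12 : ∀ n, 1 / 2 ≤ α n) (hα1 : ∀ n, α n < 1)
    (hαmono : Monotone α) (hαlim : Tendsto α atTop (𝓝 (1:ℝ)))
    (htot : Summable fun n => ∑' k, Λ n k)
    (hbound : (∑' n, ∑' k, Λ n k) < ε * (⨅ n, ‖x n‖) / (4 * K * ⨆ n, ‖x n‖))
    (hzs : ∀ n, Summable fun k => Λ n k • x k)
    (z : ℕ → X) (hz : ∀ n, z n = α n • x n + ∑' k, Λ n k • x k) :
    ∀ (n : ℕ) (a : ℕ → ℝ),
      ((1 - ε) / (4 * K)) * ‖∑ i ∈ Finset.range n, a i • x i‖ ≤ ‖∑ i ∈ Finset.range n, a i • z i‖ :=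
  stmt10_general x hsem K ε hK hbasic hε Λ hpos hzero hsum α hα htot hbound z hz
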